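/- Let r ∈ (0,1), L ∈ ℂ, and let W : ℕ → ℝ be increasing to ∞ with W(N) > 0 such that lim_{N→∞} W(N-1)/W(N) exists and lies in (0,1). If (x_n) is a bounded complex sequence with lim_{N→∞} E_{n≤N}^{Bin(r)}(x_n) = L, then lim_{N→∞} E_{n≤N}^{Bin(r)}(E_{k≤n}^W x_k) = L, where E_{k≤n}^W x_k = (1/W(n)) ∑_{k=1}^n (W(k) - W(k-1)) x_k. -/

import Mathlib

/-! Write `y = E^W x` and `ρₙ = W(n)/W(n+1) → l`; then `y (n+1) = ρₙ y n + (1 - ρₙ) x (n+1)`.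
Pascal's rule gives `B_{N+1} z = (1 - r) B_N z + r B_N (z ∘ succ)` for the binomial means `B_N`,
and binomial means send null sequences to null sequences. Hence `B_N (x ∘ succ) → L` and, up to a
null error, `B_{N+1} y = q B_N y + (1 - q) L` with `q = 1 - r (1 - l) ∈ (0, 1)`; iterating this
contraction forces `B_N y → L`. -/

open Finset Filter

/-- The `N`-th `r`-binomial average of a complex sequence. -/
noncomputable def binAvg (r : ℝ) (N : ℕ) (x : ℕ → ℂ) : ℂ :=
  ∑ n ∈ Finset.range (N + 1), (N.choose n : ℂ) * (r : ℂ) ^ n * ((1 : ℂ) - r) ^ (N - n) * x n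

/-- The right-shift operator on sequences. -/
def shiftOp (x : ℕ → ℂ) : ℕ → ℂ := fun n => if n = 0 then 0 else x (n - 1)

open Topology

noncomputable def binWeight (r : ℝ) (N n : ℕ) : ℝ :=
  N.choose n * r ^ n * (1 - r) ^ (N - n)

lemma binAvg_eq_sum_binWeight (r : ℝ) (N : ℕ) (x : ℕ → ℂ) :
    binAvg r N x = ∑ n ∈ range (N + 1), (binWeight r N n : ℂ) * x n := by
  simp [binAvg, binWeight]

lemma binWeight_nonneg {r : ℝ} (hr0 : 0 ≤ r) (hr1 : r ≤ 1) (N n : ℕ) :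
    0 ≤ binWeight r N n := by
  have : 0 ≤ 1 - r := sub_nonneg.2 hr1
  unfold binWeight
  positivity

lemma sum_binWeight (r : ℝ) (N : ℕ) : ∑ n ∈ range (N + 1), binWeight r N n = 1 := by
  have h := (add_pow r (1 - r) N).symm
  rw [add_sub_cancel, one_pow] at h
  rw [← h]
  exact sum_congr rfl fun n _ => by unfold binWeight; ring

lemma binWeight_succ_zero (r : ℝ) (N : ℕ) :
    binWeight r (N + 1) 0 = (1 - r) * binWeight r N 0 := by
  simp [binWeight, pow_succ, mul_comm]

lemma binWeight_succ_succ (r : ℝ) (N n : ℕ) :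
    binWeight r (N + 1) (n + 1) = (1 - r) * binWeight r N (n + 1) + r * binWeight r N n := by
  unfold binWeight
  rw [Nat.choose_succ_succ, Nat.succ_sub_succ]
  rcases lt_or_ge n N with h | h
  · obtain ⟨k, rfl⟩ := Nat.exists_eq_add_of_lt h
    rw [show n + k + 1 - n = k + 1 by omega, show n + k + 1 - (n + 1) = k by omega]
    push_cast
    ring
  · rw [Nat.choose_eq_zero_of_lt (by omega : N < n + 1)]
    push_cast
    ring

lemma binWeight_of_lt {r : ℝ} {N n : ℕ} (h : N < n) : binWeight r N n = 0 := by
  simp [binWeight, Nat.choose_eq_zero_of_lt h]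

lemma binAvg_succ (r : ℝ) (N : ℕ) (x : ℕ → ℂ) :
    binAvg r (N + 1) x = (1 - r) * binAvg r N x + r * binAvg r N (fun n => x (n + 1)) := by
  have hN : binAvg r N x = ∑ n ∈ range (N + 2), (binWeight r N n : ℂ) * x n := by
    rw [sum_range_succ, binWeight_of_lt (Nat.lt_succ_self N), binAvg_eq_sum_binWeight]
    simp
  simp only [hN, binAvg_eq_sum_binWeight, sum_range_succ' _ (N + 1), binWeight_succ_succ,
    binWeight_succ_zero, mul_add, mul_sum]
  push_cast
  simp only [add_mul, sum_add_distrib, mul_assoc]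
  ring

lemma tendsto_binWeight_atTop {r : ℝ} (hr : r ∈ Set.Ioo 0 1) (n : ℕ) :
    Tendsto (fun N => binWeight r N n) atTop (𝓝 0) := by
  obtain ⟨hr0, hr1⟩ := hr
  have h1r : 0 < 1 - r := sub_pos.2 hr1
  have hbound : Tendsto (fun N : ℕ => (r / (1 - r)) ^ n * ((N : ℝ) ^ n * (1 - r) ^ N))
      atTop (𝓝 0) := by
    simpa using (tendsto_pow_const_mul_const_pow_of_lt_one n h1r.le (by linarith)).const_mul
      ((r / (1 - r)) ^ n)
  refine squeeze_zero' (Eventually.of_forall fun N => binWeight_nonneg hr0.le hr1.le N n) ?_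
    hbound
  filter_upwards [eventually_ge_atTop n] with N hN
  have hchoose : (N.choose n : ℝ) ≤ (N : ℝ) ^ n := by exact_mod_cast Nat.choose_le_pow N n
  calc binWeight r N n = N.choose n * (r / (1 - r)) ^ n * (1 - r) ^ N := by
        rw [binWeight, pow_sub₀ _ h1r.ne' hN, div_pow]
        field_simp
    _ ≤ (N : ℝ) ^ n * (r / (1 - r)) ^ n * (1 - r) ^ N := by gcongr
    _ = (r / (1 - r)) ^ n * ((N : ℝ) ^ n * (1 - r) ^ N) := by ring

lemma norm_binAvg_le_sum {r : ℝ} (hr0 : 0 ≤ r) (hr1 : r ≤ 1) (N : ℕ) (x : ℕ → ℂ) :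
    ‖binAvg r N x‖ ≤ ∑ n ∈ range (N + 1), binWeight r N n * ‖x n‖ := by
  rw [binAvg_eq_sum_binWeight]
  refine (norm_sum_le _ _).trans (le_of_eq (sum_congr rfl fun n _ => ?_))
  rw [norm_mul, Complex.norm_real, Real.norm_of_nonneg (binWeight_nonneg hr0 hr1 N n)]

lemma tendsto_binAvg_zero {r : ℝ} (hr : r ∈ Set.Ioo 0 1) {x : ℕ → ℂ}
    (hx : Tendsto x atTop (𝓝 0)) : Tendsto (fun N => binAvg r N x) atTop (𝓝 0) := by
  obtain ⟨C, hC⟩ := hx.norm.bddAbove_range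
  have hw := binWeight_nonneg hr.1.le hr.2.le
  rw [NormedAddGroup.tendsto_nhds_zero] at hx ⊢
  intro ε hε
  obtain ⟨M, hM⟩ := eventually_atTop.mp (hx (ε / 2) (half_pos hε))
  have hhead : Tendsto (fun N => ∑ n ∈ range M, binWeight r N n * C) atTop (𝓝 0) := by
    simpa using tendsto_finsetSum _ fun n _ => (tendsto_binWeight_atTop hr n).mul_const C
  filter_upwards [hhead.eventually_lt_const (half_pos hε), eventually_ge_atTop M]
    with N hhead hMN
  calc ‖binAvg r N x‖ ≤ ∑ n ∈ range (N + 1), binWeight r N n * ‖x n‖ :=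
        norm_binAvg_le_sum hr.1.le hr.2.le N x
    _ = ∑ n ∈ range M, binWeight r N n * ‖x n‖
          + ∑ n ∈ Ico M (N + 1), binWeight r N n * ‖x n‖ :=
        (sum_range_add_sum_Ico _ (by omega)).symm
    _ ≤ ∑ n ∈ range M, binWeight r N n * C + ∑ n ∈ Ico M (N + 1), binWeight r N n * (ε / 2) := by
        gcongr with n _ n hn
        · exact hw N n
        · exact hC ⟨n, rfl⟩
        · exact hw N n
        · exact (hM n (mem_Ico.1 hn).1).le
    _ ≤ ∑ n ∈ range M, binWeight r N n * C + ∑ n ∈ range (N + 1), binWeight r N n * (ε / 2) := by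
        gcongr
        · exact fun n _ _ => mul_nonneg (hw N n) (half_pos hε).le
        · exact fun n hn => mem_range.2 (mem_Ico.1 hn).2
    _ < ε / 2 + ε / 2 := by
        rw [← sum_mul (range (N + 1)), sum_binWeight, one_mul]
        linarith
    _ = ε := add_halves ε

lemma tendsto_binAvg_comp_succ {r : ℝ} (hr : r ≠ 0) {x : ℕ → ℂ} {L : ℂ}
    (h : Tendsto (fun N => binAvg r N x) atTop (𝓝 L)) :
    Tendsto (fun N => binAvg r N (fun n => x (n + 1))) atTop (𝓝 L) := by
  have hr' : (r : ℂ) ≠ 0 := by exact_mod_cast hr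
  have := ((h.comp (tendsto_add_atTop_nat 1)).sub (h.const_mul (1 - (r : ℂ)))).const_mul (r : ℂ)⁻¹
  convert this using 2 with N
  · simp only [Function.comp_apply, binAvg_succ]
    field_simp
    ring
  · field_simp
    ring

lemma tendsto_zero_of_le_mul_add {c δ : ℕ → ℝ} {q : ℝ} (hq0 : 0 ≤ q) (hq1 : q < 1)
    (hc : ∀ n, 0 ≤ c n) (hδ : Tendsto δ atTop (𝓝 0)) (hrec : ∀ n, c (n + 1) ≤ q * c n + δ n) :
    Tendsto c atTop (𝓝 0) := by
  refine tendsto_order.2 ⟨fun a ha => Eventually.of_forall fun n => ha.trans_le (hc n),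
    fun ε hε => ?_⟩
  have hδε : 0 < (1 - q) * (ε / 2) := mul_pos (sub_pos.2 hq1) (half_pos hε)
  obtain ⟨N₀, hN₀⟩ := eventually_atTop.mp (hδ.eventually_lt_const hδε)
  have hbound : ∀ n ≥ N₀, c n ≤ q ^ (n - N₀) * c N₀ + ε / 2 := by
    intro n hn
    induction n, hn using Nat.le_induction with
    | base => simpa using (half_pos hε).le
    | succ n hn ih =>
      calc c (n + 1) ≤ q * (q ^ (n - N₀) * c N₀ + ε / 2) + (1 - q) * (ε / 2) := by
            nlinarith [hrec n, hN₀ n hn]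
        _ = q ^ (n + 1 - N₀) * c N₀ + ε / 2 := by
            rw [Nat.sub_add_comm hn, pow_succ]
            ring
  have hgeom : Tendsto (fun n => q ^ (n - N₀) * c N₀) atTop (𝓝 0) := by
    simpa using ((tendsto_pow_atTop_nhds_zero_of_lt_one hq0 hq1).comp
      (tendsto_sub_atTop_nat N₀)).mul_const (c N₀)
  filter_upwards [hgeom.eventually_lt_const (half_pos hε), eventually_ge_atTop N₀]
    with n hn hN₀n
  linarith [hbound n hN₀n]

lemma tendsto_of_tendsto_sub_smul_sub {𝕜 E : Type*} [NormedField 𝕜] [SeminormedAddCommGroup E]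
    [NormedSpace 𝕜 E] {a : ℕ → E} {L : E} {q : 𝕜} (hq : ‖q‖ < 1)
    (h : Tendsto (fun n => a (n + 1) - L - q • (a n - L)) atTop (𝓝 0)) :
    Tendsto a atTop (𝓝 L) := by
  rw [tendsto_iff_norm_sub_tendsto_zero]
  refine tendsto_zero_of_le_mul_add (norm_nonneg q) hq (fun n => norm_nonneg _)
    (by simpa using h.norm) fun n => ?_
  calc ‖a (n + 1) - L‖ = ‖q • (a n - L) + (a (n + 1) - L - q • (a n - L))‖ := by
        rw [add_sub_cancel]
    _ ≤ ‖q‖ * ‖a n - L‖ + ‖a (n + 1) - L - q • (a n - L)‖ := by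
        rw [← norm_smul]
        exact norm_add_le _ _

noncomputable def weightedAvg (W : ℕ → ℝ) (x : ℕ → ℂ) (n : ℕ) : ℂ :=
  (1 / (W n : ℂ)) * ∑ k ∈ Icc 1 n, ((W k - W (k - 1) : ℝ) : ℂ) * x k

lemma weightedAvg_zero (W : ℕ → ℝ) (x : ℕ → ℂ) : weightedAvg W x 0 = 0 := by
  simp [weightedAvg]

lemma weightedAvg_succ {W : ℕ → ℝ} (x : ℕ → ℂ) {n : ℕ} (hn : W n ≠ 0) (hn' : W (n + 1) ≠ 0) :
    weightedAvg W x (n + 1) =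
      ((W n / W (n + 1) : ℝ) : ℂ) * weightedAvg W x n
        + ((1 - W n / W (n + 1) : ℝ) : ℂ) * x (n + 1) := by
  have hn : (W n : ℂ) ≠ 0 := by exact_mod_cast hn
  have hn' : (W (n + 1) : ℂ) ≠ 0 := by exact_mod_cast hn'
  simp only [weightedAvg, sum_Icc_succ_top (Nat.le_add_left 1 n), Nat.add_sub_cancel]
  push_cast
  field_simp

lemma norm_weightedAvg_le {W : ℕ → ℝ} (hW : Monotone W) (hWpos : ∀ n, 0 < W n) {x : ℕ → ℂ}
    {C : ℝ} (hC : ∀ n, ‖x n‖ ≤ C) (n : ℕ) : ‖weightedAvg W x n‖ ≤ C := by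
  induction n with
  | zero => simpa [weightedAvg_zero] using (norm_nonneg _).trans (hC 0)
  | succ n ih =>
    have hρ0 : 0 ≤ W n / W (n + 1) := (div_pos (hWpos n) (hWpos _)).le
    have hρ1 : 0 ≤ 1 - W n / W (n + 1) :=
      sub_nonneg.2 (div_le_one_of_le₀ (hW n.le_succ) (hWpos _).le)
    rw [weightedAvg_succ x (hWpos n).ne' (hWpos _).ne']
    calc _ ≤ W n / W (n + 1) * ‖weightedAvg W x n‖ + (1 - W n / W (n + 1)) * ‖x (n + 1)‖ := by
          refine (norm_add_le _ _).trans_eq ?_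
          rw [norm_mul, norm_mul, Complex.norm_real, Complex.norm_real,
            Real.norm_of_nonneg hρ0, Real.norm_of_nonneg hρ1]
      _ ≤ W n / W (n + 1) * C + (1 - W n / W (n + 1)) * C := by gcongr; exact hC _
      _ = C := by ring

lemma tendsto_binAvg_of_succ_eq {r l : ℝ} (hr : r ∈ Set.Ioo 0 1) (hl : l ∈ Set.Ioo 0 1)
    {x y e : ℕ → ℂ} {L : ℂ} (hx : Tendsto (fun N => binAvg r N x) atTop (𝓝 L))
    (he : Tendsto e atTop (𝓝 0)) (hy : ∀ n, y (n + 1) = l * y n + (1 - l) * x (n + 1) + e n) :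
    Tendsto (fun N => binAvg r N y) atTop (𝓝 L) := by
  obtain ⟨hr0, hr1⟩ := hr
  obtain ⟨hl0, hl1⟩ := hl
  set q : ℂ := ((1 - r * (1 - l) : ℝ) : ℂ)
  have hq : ‖q‖ < 1 := by
    rw [Complex.norm_real, Real.norm_eq_abs, abs_lt]
    constructor <;> nlinarith
  have hstep : ∀ N, binAvg r (N + 1) y - L - q • (binAvg r N y - L)
      = r * (1 - l) * (binAvg r N (fun n => x (n + 1)) - L) + r * binAvg r N e := fun N => by
    have hy' : binAvg r N (fun n => y (n + 1))
        = l * binAvg r N y + (1 - l) * binAvg r N (fun n => x (n + 1)) + binAvg r N e := by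
      simp only [binAvg, hy, mul_sum, ← sum_add_distrib]
      exact sum_congr rfl fun n _ => by ring
    rw [binAvg_succ, hy', smul_eq_mul]
    push_cast [q]
    ring
  refine tendsto_of_tendsto_sub_smul_sub hq ?_
  simp only [hstep]
  simpa using (((tendsto_binAvg_comp_succ hr0.ne' hx).sub_const L).const_mul _).add
    ((tendsto_binAvg_zero ⟨hr0, hr1⟩ he).const_mul _)

theorem stmt_13_general (r : ℝ) (hr : r ∈ Set.Ioo (0:ℝ) 1) (L : ℂ)
    (W : ℕ → ℝ) (hW : StrictMono W)
    (hWpos : ∀ n, 0 < W n) (l : ℝ) (hl : l ∈ Set.Ioo (0:ℝ) 1)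
    (hlim : Tendsto (fun N => W (N - 1) / W N) atTop (nhds l))
    (x : ℕ → ℂ) (hx : ∃ C, ∀ n, ‖x n‖ ≤ C)
    (h : Tendsto (fun N => binAvg r N x) atTop (nhds L)) :
    Tendsto (fun N => binAvg r N (fun n =>
        (1 / (W n : ℂ)) * ∑ k ∈ Finset.Icc 1 n, ((W k - W (k - 1) : ℝ) : ℂ) * x k))
      atTop (nhds L) := by
  obtain ⟨C, hC⟩ := hx
  change Tendsto (fun N => binAvg r N (weightedAvg W x)) atTop (𝓝 L)
  set y := weightedAvg W x
  set ρ : ℕ → ℝ := fun n => W n / W (n + 1)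
  have hρ : Tendsto ρ atTop (𝓝 l) := by
    simpa [Function.comp_def] using hlim.comp (tendsto_add_atTop_nat 1)
  refine tendsto_binAvg_of_succ_eq hr hl h
    (e := fun n => ((ρ n - l : ℝ) : ℂ) * (y n - x (n + 1))) ?_ fun n => ?_
  · refine Tendsto.zero_mul_isBoundedUnder_le (by simpa using (hρ.sub_const l).ofReal) ?_
    exact isBoundedUnder_of ⟨C + C, fun n =>
      (norm_sub_le _ _).trans (add_le_add (norm_weightedAvg_le hW.monotone hWpos hC n) (hC _))⟩
  · simp only [y, ρ, weightedAvg_succ x (hWpos n).ne' (hWpos _).ne']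
    push_cast
    ring

theorem stmt_13 (r : ℝ) (hr : r ∈ Set.Ioo (0:ℝ) 1) (L : ℂ)
    (W : ℕ → ℝ) (hW : StrictMono W) (hWtop : Tendsto W atTop atTop)
    (hWpos : ∀ n, 0 < W n) (l : ℝ) (hl : l ∈ Set.Ioo (0:ℝ) 1)
    (hlim : Tendsto (fun N => W (N - 1) / W N) atTop (nhds l))
    (x : ℕ → ℂ) (hx : ∃ C, ∀ n, ‖x n‖ ≤ C)
    (h : Tendsto (fun N => binAvg r N x) atTop (nhds L)) :
    Tendsto (fun N => binAvg r N (fun n =>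
        (1 / (W n : ℂ)) * ∑ k ∈ Finset.Icc 1 n, ((W k - W (k - 1) : ℝ) : ℂ) * x k))
      atTop (nhds L) :=
  stmt_13_general r hr L W hW hWpos l hl hlim x hx h
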